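/- arXiv:math/0005059 — 5 statements merged into one kernel-verified Lean document; each statement's English description precedes it below -/
import Mathlib

section
/- Let L, M ∈ Gr_{p,q}, let u_1,…,u_p be an arbitrary (not necessarily orthogonal) basis of L and v_1,…,v_p an arbitrary basis of M. Let U be the p×p matrix with entries ⟨u_i, u_j⟩, V the p×p matrix with entries ⟨v_i, v_j⟩, and W the p×p matrix with entries ⟨u_i, v_j⟩. Then the multiset {λ_1[L,M]², …, λ_p[L,M]²} coincides with the multiset of eigenvalues of the matrix U^{-1} W V^{-1} Wᵗ. -/
open Module Submodule Real Set
open scoped RealInnerProductSpace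

/-- Decreasing rearrangement of a tuple of reals. -/
noncomputable def sortDesc {n : ℕ} (v : Fin n → ℝ) : Fin n → ℝ :=
  fun i => v (Tuple.sort v i.rev)

/-- The singular values of a real `m × n` matrix, listed in decreasing order:
the square roots of the eigenvalues of `A * Aᵀ`. -/
noncomputable def matSingVals {m n : ℕ} (A : Matrix (Fin m) (Fin n) ℝ) : Fin m → ℝ :=
  sortDesc fun i => Real.sqrt ((Matrix.isHermitian_mul_conjTranspose_self A).eigenvalues i)

/-- `v` is an orthonormal basis of the subspace `L`. -/
def IsONBasisOf {n m : ℕ} (v : Fin m → EuclideanSpace ℝ (Fin n))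
    (L : Submodule ℝ (EuclideanSpace ℝ (Fin n))) : Prop :=
  Orthonormal ℝ v ∧ Submodule.span ℝ (Set.range v) = L

/-- The matrix `⟨e i, f j⟩`. -/
noncomputable def grammian {n m : ℕ} (e f : Fin m → EuclideanSpace ℝ (Fin n)) :
    Matrix (Fin m) (Fin m) ℝ :=
  Matrix.of fun i j => ⟪e i, f j⟫

open Classical in
/-- `λ_1[L,M] ≥ … ≥ λ_p[L,M]`: the singular values of the matrix `⟨e i, f j⟩` formed from
orthonormal bases of `L` and `M` (independent of the choice of bases). -/
noncomputable def subSingVals (p : ℕ) {n : ℕ}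
    (L M : Submodule ℝ (EuclideanSpace ℝ (Fin n))) : Fin p → ℝ :=
  if h : (∃ e : Fin p → EuclideanSpace ℝ (Fin n), IsONBasisOf e L) ∧
         (∃ f : Fin p → EuclideanSpace ℝ (Fin n), IsONBasisOf f M)
  then matSingVals (grammian h.1.choose h.2.choose)
  else 0

/-- The Jordan angles `Ψ_1[L,M] ≤ … ≤ Ψ_p[L,M]`. -/
noncomputable def jordanAngles (p : ℕ) {n : ℕ}
    (L M : Submodule ℝ (EuclideanSpace ℝ (Fin n))) : Fin p → ℝ :=
  fun i => Real.arccos (subSingVals p L M i)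

/-- The orbit of a vector under the group `W_p` of signed permutations of the coordinates. -/
def WOrbit {p : ℕ} (v : Fin p → ℝ) : Set (Fin p → ℝ) :=
  {w | ∃ (σ : Equiv.Perm (Fin p)) (ε : Fin p → ℝ),
    (∀ i, ε i = 1 ∨ ε i = -1) ∧ w = fun i => ε i * v (σ i)}

/-! Expand `u`, `v` in orthonormal bases `e`, `f` of `L`, `M`. With `A = (⟨e_k, u_j⟩)`,
`B = (⟨f_l, v_j⟩)` and `Λ = (⟨e_k, f_l⟩)`, Parseval's identity gives `U = AᵀA`, `V = BᵀB` and
`W = AᵀΛB`, so `U⁻¹WV⁻¹Wᵀ = A⁻¹(ΛΛᵀ)A` has the characteristic polynomial of `ΛΛᵀ`, whose roots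
are the squared singular values of `Λ`, i.e. the `λ_i[L,M]²`. -/

open Matrix

theorem map_univ_sortDesc {n : ℕ} (v : Fin n → ℝ) :
    Finset.univ.val.map (sortDesc v) = Finset.univ.val.map v := by
  have hperm : sortDesc v = v ∘ (Fin.revPerm.trans (Tuple.sort v)) := rfl
  rw [hperm, ← Multiset.map_map, Multiset.map_univ_val_equiv]

theorem map_univ_matSingVals_sq {m n : ℕ} (A : Matrix (Fin m) (Fin n) ℝ) :
    Finset.univ.val.map (fun i => matSingVals A i ^ 2) = (A * Aᴴ).charpoly.roots := by
  have hA := isHermitian_mul_conjTranspose_self A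
  rw [hA.roots_charpoly_eq_eigenvalues, ← Function.comp_def (· ^ 2), ← Multiset.map_map,
    matSingVals, map_univ_sortDesc, Multiset.map_map]
  refine Multiset.map_congr rfl fun i _ => ?_
  exact Real.sq_sqrt (eigenvalues_self_mul_conjTranspose_nonneg A i)

section Grammian

variable {n m : ℕ} {L : Submodule ℝ (EuclideanSpace ℝ (Fin n))}

theorem grammian_transpose (e f : Fin m → EuclideanSpace ℝ (Fin n)) :
    (grammian e f)ᵀ = grammian f e := by
  ext i j
  exact real_inner_comm (f i) (e j)

theorem IsONBasisOf.inner_eq_sum_of_mem_right {e : Fin m → EuclideanSpace ℝ (Fin n)}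
    (he : IsONBasisOf e L) (x : EuclideanSpace ℝ (Fin n)) {y : EuclideanSpace ℝ (Fin n)} (hy : y ∈ L) :
    ⟪x, y⟫ = ∑ k, ⟪x, e k⟫ * ⟪e k, y⟫ := by
  obtain ⟨c, rfl⟩ := (mem_span_range_iff_exists_fun ℝ).mp (he.2 ▸ hy)
  simp only [he.1.inner_right_fintype, inner_sum, real_inner_smul_right, mul_comm]

theorem IsONBasisOf.inner_eq_sum_of_mem_left {e : Fin m → EuclideanSpace ℝ (Fin n)}
    (he : IsONBasisOf e L) {x : EuclideanSpace ℝ (Fin n)} (hx : x ∈ L) (y : EuclideanSpace ℝ (Fin n)) :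
    ⟪x, y⟫ = ∑ k, ⟪x, e k⟫ * ⟪e k, y⟫ := by
  rw [real_inner_comm, he.inner_eq_sum_of_mem_right y hx]
  simp only [real_inner_comm, mul_comm]

theorem IsONBasisOf.grammian_eq_mul_of_mem_right {e y : Fin m → EuclideanSpace ℝ (Fin n)}
    (he : IsONBasisOf e L) (x : Fin m → EuclideanSpace ℝ (Fin n)) (hy : ∀ j, y j ∈ L) :
    grammian x y = grammian x e * grammian e y := by
  ext i j
  exact he.inner_eq_sum_of_mem_right (x i) (hy j)

theorem IsONBasisOf.grammian_eq_mul_of_mem_left {e x : Fin m → EuclideanSpace ℝ (Fin n)}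
    (he : IsONBasisOf e L) (hx : ∀ i, x i ∈ L) (y : Fin m → EuclideanSpace ℝ (Fin n)) :
    grammian x y = grammian x e * grammian e y := by
  ext i j
  exact he.inner_eq_sum_of_mem_left (hx i) (y j)

theorem IsONBasisOf.isUnit_det_grammian {e x : Fin m → EuclideanSpace ℝ (Fin n)}
    (he : IsONBasisOf e L) (hx : ∀ i, x i ∈ L)
    (hxi : LinearIndependent ℝ x) : IsUnit (grammian e x).det := by
  have hgram : IsUnit (grammian x x).det :=
    (posDef_gram_of_linearIndependent hxi).det_pos.ne'.isUnit
  rw [he.grammian_eq_mul_of_mem_right x hx, ← grammian_transpose, det_mul, det_transpose] at hgram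
  exact (IsUnit.mul_iff.mp hgram).1

theorem exists_isONBasisOf (hL : finrank ℝ L = m) :
    ∃ e : Fin m → EuclideanSpace ℝ (Fin n), IsONBasisOf e L := by
  let e := (stdOrthonormalBasis ℝ L).reindex (finCongr hL)
  refine ⟨fun i => e i, e.orthonormal.comp_linearIsometry L.subtypeₗᵢ, ?_⟩
  change span ℝ (range (L.subtype ∘ e)) = L
  rw [Set.range_comp, ← Submodule.map_span, ← e.coe_toBasis, e.toBasis.span_eq,
    Submodule.map_top]
  exact L.range_subtype

end Grammian

theorem charpoly_inv_mul_mul_inv_mul_transpose {n R : Type*} [Fintype n] [DecidableEq n] [CommRing R]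
    {A B : Matrix n n R} (hA : IsUnit A.det) (hB : IsUnit B.det) (Λ : Matrix n n R) :
    ((Aᵀ * A)⁻¹ * (Aᵀ * Λ * B) * (Bᵀ * B)⁻¹ * (Aᵀ * Λ * B)ᵀ).charpoly = (Λ * Λᵀ).charpoly := by
  have := A.invertibleOfIsUnitDet hA
  have := B.invertibleOfIsUnitDet hB
  have := Aᵀ.invertibleOfIsUnitDet (by rwa [det_transpose])
  have := Bᵀ.invertibleOfIsUnitDet (by rwa [det_transpose])
  have hconj : (Aᵀ * A)⁻¹ * (Aᵀ * Λ * B) * (Bᵀ * B)⁻¹ * (Aᵀ * Λ * B)ᵀ = A⁻¹ * (Λ * Λᵀ * A) := by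
    simp only [Matrix.mul_inv_rev, transpose_mul, transpose_transpose, Matrix.mul_assoc,
      inv_mul_cancel_left_of_invertible, mul_inv_cancel_left_of_invertible]
  rw [hconj, charpoly_mul_comm, Matrix.mul_assoc, mul_inv_of_invertible, Matrix.mul_one]

theorem lambda_sq_eq_eigenvalues_of_gram_general (p q : ℕ)
    (L M : Submodule ℝ (EuclideanSpace ℝ (Fin (p + q))))
    (u : Basis (Fin p) ℝ ↥L) (v : Basis (Fin p) ℝ ↥M)
    (U V W : Matrix (Fin p) (Fin p) ℝ)
    (hU : ∀ i j, U i j = ⟪(u i : EuclideanSpace ℝ (Fin (p + q))), (u j : EuclideanSpace ℝ (Fin (p + q)))⟫)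
    (hV : ∀ i j, V i j = ⟪(v i : EuclideanSpace ℝ (Fin (p + q))), (v j : EuclideanSpace ℝ (Fin (p + q)))⟫)
    (hW : ∀ i j, W i j = ⟪(u i : EuclideanSpace ℝ (Fin (p + q))), (v j : EuclideanSpace ℝ (Fin (p + q)))⟫) :
    (U⁻¹ * W * V⁻¹ * W.transpose).charpoly.roots =
      Multiset.map (fun i => subSingVals p L M i ^ 2) Finset.univ.val := by
  set u' : Fin p → EuclideanSpace ℝ (Fin (p + q)) := fun i => u i
  set v' : Fin p → EuclideanSpace ℝ (Fin (p + q)) := fun i => v i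
  have hu' : ∀ i, u' i ∈ L := fun i => (u i).2
  have hv' : ∀ i, v' i ∈ M := fun i => (v i).2
  have hON : (∃ e, IsONBasisOf e L) ∧ (∃ f, IsONBasisOf f M) :=
    ⟨exists_isONBasisOf ((finrank_eq_card_basis u).trans (Fintype.card_fin p)),
      exists_isONBasisOf ((finrank_eq_card_basis v).trans (Fintype.card_fin p))⟩
  have he := hON.1.choose_spec
  have hf := hON.2.choose_spec
  set e := hON.1.choose
  set f := hON.2.choose
  have hU' : U = (grammian e u')ᵀ * grammian e u' := by
    rw [grammian_transpose, ← he.grammian_eq_mul_of_mem_right u' hu']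
    exact Matrix.ext hU
  have hV' : V = (grammian f v')ᵀ * grammian f v' := by
    rw [grammian_transpose, ← hf.grammian_eq_mul_of_mem_right v' hv']
    exact Matrix.ext hV
  have hW' : W = (grammian e u')ᵀ * grammian e f * grammian f v' := by
    rw [grammian_transpose, ← he.grammian_eq_mul_of_mem_left hu',
      ← hf.grammian_eq_mul_of_mem_right u' hv']
    exact Matrix.ext hW
  have hA := he.isUnit_det_grammian hu' (u.linearIndependent.map' L.subtype L.ker_subtype)
  have hB := hf.isUnit_det_grammian hv' (v.linearIndependent.map' M.subtype M.ker_subtype)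
  rw [hU', hV', hW', charpoly_inv_mul_mul_inv_mul_transpose hA hB, ← conjTranspose_eq_transpose_of_trivial,
    ← map_univ_matSingVals_sq, subSingVals, dif_pos hON]

/-- For arbitrary (not necessarily orthogonal) bases `u` of `L` and `v` of `M`, with Gram
matrices `U = (⟨u_i,u_j⟩)`, `V = (⟨v_i,v_j⟩)` and `W = (⟨u_i,v_j⟩)`, the multiset
`{λ_1[L,M]², …, λ_p[L,M]²}` coincides with the multiset of eigenvalues of
`U⁻¹ W V⁻¹ Wᵀ`. -/
theorem lambda_sq_eq_eigenvalues_of_gram (p q : ℕ) (hp : 1 ≤ p) (hpq : p ≤ q)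
    (L M : Submodule ℝ (EuclideanSpace ℝ (Fin (p + q))))
    (hL : finrank ℝ L = p) (hM : finrank ℝ M = p)
    (u : Basis (Fin p) ℝ ↥L) (v : Basis (Fin p) ℝ ↥M)
    (U V W : Matrix (Fin p) (Fin p) ℝ)
    (hU : ∀ i j, U i j = ⟪(u i : EuclideanSpace ℝ (Fin (p + q))), (u j : EuclideanSpace ℝ (Fin (p + q)))⟫)
    (hV : ∀ i j, V i j = ⟪(v i : EuclideanSpace ℝ (Fin (p + q))), (v j : EuclideanSpace ℝ (Fin (p + q)))⟫)
    (hW : ∀ i j, W i j = ⟪(u i : EuclideanSpace ℝ (Fin (p + q))), (v j : EuclideanSpace ℝ (Fin (p + q)))⟫) :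
    (U⁻¹ * W * V⁻¹ * W.transpose).charpoly.roots =
      Multiset.map (fun i => subSingVals p L M i ^ 2) Finset.univ.val :=
  lambda_sq_eq_eigenvalues_of_gram_general p q L M u v U V W hU hV hW
end

section
/- For L, L' ∈ Gr_{p,q} and linear maps H : L → L^⊥ and H' : L' → L'^⊥, the following are equivalent: (i) ρ_j[L;H] = ρ_j[L';H'] for all j = 1,…,p; (ii) there exists g ∈ O(p+q) such that gL = L' and H'(g v) = g(H v) for every v ∈ L. -/
open Module Submodule Real Set
open scoped RealInnerProductSpace

/-! Both conditions are equivalent to `H` and `H'` being conjugate by isometries `φ : L ≃ L'` and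
`ψ : Lᗮ ≃ L'ᗮ`, i.e. `H' ∘ φ = ψ ∘ H`: such a pair glues along `E = L ⊕ Lᗮ` to an orthogonal
map `g`, and any `g` as in (ii) restricts to such a pair. Conjugation by `φ` carries `H*H` to
`H'*H'`, so (ii) gives (i). For the converse, a singular value decomposition `H eᵢ = ρᵢ bᵢ` with
orthonormal bases `e` of `L` and `b` of `Lᗮ` is obtained from an eigenbasis `e` of `H*H`: the
vectors `H eᵢ / ρᵢ` with `ρᵢ ≠ 0` are orthonormal, and are extended to `b`.
Matching the decompositions of `H` and `H'` gives `φ` and `ψ`. -/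

open LinearMap

theorem Monotone.eq_of_multiset_map_univ_eq {α : Type*} [PartialOrder α] {n : ℕ}
    {f g : Fin n → α} (hf : Monotone f) (hg : Monotone g)
    (h : Multiset.map f Finset.univ.val = Multiset.map g Finset.univ.val) : f = g := by
  rw [Fin.univ_val_map, Fin.univ_val_map, Multiset.coe_eq_coe] at h
  exact List.ofFn_injective (h.eq_of_sortedLE hf.sortedLE_ofFn hg.sortedLE_ofFn)

theorem Monotone.eq_of_multiset_map_sq_eq {n : ℕ} {f g : Fin n → ℝ}
    (hf : Monotone f) (hg : Monotone g) (hf₀ : ∀ i, 0 ≤ f i) (hg₀ : ∀ i, 0 ≤ g i)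
    (h : Multiset.map (fun i => f i ^ 2) Finset.univ.val =
      Multiset.map (fun i => g i ^ 2) Finset.univ.val) : f = g := by
  have hsq := Monotone.eq_of_multiset_map_univ_eq
    (fun i j hij => pow_le_pow_left₀ (hf₀ i) (hf hij) 2)
    (fun i j hij => pow_le_pow_left₀ (hg₀ i) (hg hij) 2) h
  exact funext fun i => (pow_left_inj₀ (hf₀ i) (hg₀ i) two_ne_zero).mp (congrFun hsq i)

section

variable {V W V' W' : Type*}
  [NormedAddCommGroup V] [InnerProductSpace ℝ V] [FiniteDimensional ℝ V]
  [NormedAddCommGroup W] [InnerProductSpace ℝ W] [FiniteDimensional ℝ W]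
  [NormedAddCommGroup V'] [InnerProductSpace ℝ V'] [FiniteDimensional ℝ V']
  [NormedAddCommGroup W'] [InnerProductSpace ℝ W'] [FiniteDimensional ℝ W']

theorem LinearMap.IsSymmetric.exists_orthonormalBasis_apply_eq_smul {S : V →ₗ[ℝ] V}
    (hS : S.IsSymmetric) {n : ℕ} (hn : finrank ℝ V = n) {μ : Fin n → ℝ} (hμ : Monotone μ)
    (hroots : S.charpoly.roots = Multiset.map μ Finset.univ.val) :
    ∃ e : OrthonormalBasis (Fin n) ℝ V, ∀ i, S (e i) = μ i • e i := by
  set σ := Tuple.sort (hS.eigenvalues hn)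
  have hσ : hS.eigenvalues hn ∘ σ = μ := by
    refine (Tuple.monotone_sort _).eq_of_multiset_map_univ_eq hμ ?_
    rw [← Multiset.map_map, Multiset.map_univ_val_equiv, ← hroots,
      hS.roots_charpoly_eq_eigenvalues hn]
    rfl
  refine ⟨(hS.eigenvectorBasis hn).reindex σ.symm, fun i => ?_⟩
  rw [OrthonormalBasis.reindex_apply, Equiv.symm_symm, hS.apply_eigenvectorBasis, ← hσ]
  rfl

theorem LinearMap.exists_orthonormalBasis_apply_eq_smul_castLE {p q : ℕ} (hpq : p ≤ q)
    (T : V →ₗ[ℝ] W) (hV : finrank ℝ V = p) (hW : finrank ℝ W = q) {ν : Fin p → ℝ}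
    (hν : Monotone ν) (hν₀ : ∀ i, 0 ≤ ν i)
    (hroots : (adjoint T ∘ₗ T).charpoly.roots =
      Multiset.map (fun i => ν i ^ 2) Finset.univ.val) :
    ∃ (e : OrthonormalBasis (Fin p) ℝ V) (b : OrthonormalBasis (Fin q) ℝ W),
      ∀ i, T (e i) = ν i • b (Fin.castLE hpq i) := by
  obtain ⟨e, he⟩ := T.isSymmetric_adjoint_comp_self.exists_orthonormalBasis_apply_eq_smul hV
    (fun i j hij => pow_le_pow_left₀ (hν₀ i) (hν hij) 2) hroots
  have hgram (i j : Fin p) : ⟪T (e i), T (e j)⟫ = ν i ^ 2 * if i = j then 1 else 0 := by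
    rw [← adjoint_inner_left, ← comp_apply, he, real_inner_smul_left,
      orthonormal_iff_ite.mp e.orthonormal]
  set f : Fin q → W := fun j => if h : (j : ℕ) < p then (ν ⟨j, h⟩)⁻¹ • T (e ⟨j, h⟩) else 0
  have hf (i : Fin p) : f (Fin.castLE hpq i) = (ν i)⁻¹ • T (e i) := by simp [f]
  set s : Set (Fin q) := Fin.castLE hpq '' {i | ν i ≠ 0}
  have hs : Orthonormal ℝ (s.domRestrict f) := by
    rw [orthonormal_iff_ite]
    rintro ⟨_, hi⟩ ⟨_, hj⟩
    obtain ⟨i, hi : ν i ≠ 0, rfl⟩ := hi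
    obtain ⟨j, -, rfl⟩ := hj
    simp only [Set.domRestrict_apply, hf, real_inner_smul_left, real_inner_smul_right, hgram]
    rcases eq_or_ne i j with rfl | hij
    · simp only [if_true]
      field_simp
    · rw [if_neg hij, if_neg (by simpa [Subtype.ext_iff] using hij)]
      ring
  obtain ⟨b, hb⟩ := hs.exists_orthonormalBasis_extension_of_card_eq (by simp [hW])
  refine ⟨e, b, fun i => ?_⟩
  by_cases hνi : ν i = 0
  · have : ⟪T (e i), T (e i)⟫ = 0 := by rw [hgram, hνi]; ring
    rw [inner_self_eq_zero.mp this, hνi, zero_smul]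
  · rw [hb _ ⟨i, hνi, rfl⟩, hf, smul_smul, mul_inv_cancel₀ hνi, one_smul]

theorem LinearMap.exists_linearIsometryEquiv_comp_eq_comp {p q : ℕ} (T : V →ₗ[ℝ] W)
    (T' : V' →ₗ[ℝ] W') (hpq : p ≤ q) (hV : finrank ℝ V = p) (hV' : finrank ℝ V' = p)
    (hW : finrank ℝ W = q) (hW' : finrank ℝ W' = q) {ν : Fin p → ℝ} (hν : Monotone ν)
    (hν₀ : ∀ i, 0 ≤ ν i)
    (hroots : (adjoint T ∘ₗ T).charpoly.roots =
      Multiset.map (fun i => ν i ^ 2) Finset.univ.val)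
    (hroots' : (adjoint T' ∘ₗ T').charpoly.roots =
      Multiset.map (fun i => ν i ^ 2) Finset.univ.val) :
    ∃ (φ : V ≃ₗᵢ[ℝ] V') (ψ : W ≃ₗᵢ[ℝ] W'), T' ∘ₗ φ.toLinearMap = ψ.toLinearMap ∘ₗ T := by
  obtain ⟨e, b, hT⟩ := T.exists_orthonormalBasis_apply_eq_smul_castLE hpq hV hW hν hν₀ hroots
  obtain ⟨e', b', hT'⟩ :=
    T'.exists_orthonormalBasis_apply_eq_smul_castLE hpq hV' hW' hν hν₀ hroots'
  refine ⟨e.equiv e' (.refl _), b.equiv b' (.refl _), e.toBasis.ext fun i => ?_⟩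
  simp [hT, hT']

theorem LinearMap.charpoly_adjoint_comp_self_eq_of_comp_eq_comp (T : V →ₗ[ℝ] W)
    (T' : V' →ₗ[ℝ] W') (φ : V ≃ₗᵢ[ℝ] V') (ψ : W ≃ₗᵢ[ℝ] W')
    (h : T' ∘ₗ φ.toLinearMap = ψ.toLinearMap ∘ₗ T) :
    (adjoint T' ∘ₗ T').charpoly = (adjoint T ∘ₗ T).charpoly := by
  have hT' : T' = ψ.toLinearMap ∘ₗ T ∘ₗ φ.symm.toLinearMap := by
    rw [← comp_assoc, ← h, comp_assoc]
    ext; simp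
  have hconj : adjoint T' ∘ₗ T' = φ.toLinearEquiv.conj (adjoint T ∘ₗ T) := by
    rw [hT', adjoint_comp, adjoint_comp, φ.symm.adjoint_toLinearMap_eq_symm,
      ψ.adjoint_toLinearMap_eq_symm]
    ext x
    simp [LinearEquiv.conj_apply]
  rw [hconj, LinearEquiv.charpoly_conj]

end

namespace LinearIsometryEquiv

variable {𝕜 E : Type*} [RCLike 𝕜] [NormedAddCommGroup E] [InnerProductSpace 𝕜 E]
  {K K' : Submodule 𝕜 E}

theorem exists_restrict_of_map_eq (g : E ≃ₗᵢ[𝕜] E)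
    (h : K.map g.toLinearEquiv.toLinearMap = K') :
    ∃ (φ : K ≃ₗᵢ[𝕜] K') (ψ : Kᗮ ≃ₗᵢ[𝕜] K'ᗮ), (∀ x, (φ x : E) = g x) ∧ ∀ y, (ψ y : E) = g y :=
  ⟨(g.submoduleMap K).trans (ofEq _ _ h),
    (g.submoduleMap Kᗮ).trans (ofEq _ _ ((K.map_orthogonal_equiv g).trans (congrArg _ h))),
    fun _ => rfl, fun _ => rfl⟩

variable [K.HasOrthogonalProjection] [K'.HasOrthogonalProjection]

noncomputable def orthogonalCongr (φ : K ≃ₗᵢ[𝕜] K') (ψ : Kᗮ ≃ₗᵢ[𝕜] K'ᗮ) : E ≃ₗᵢ[𝕜] E :=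
  K.orthogonalDecomposition.trans ((φ.withLpProdCongr 2 ψ).trans K'.orthogonalDecomposition.symm)

variable (φ : K ≃ₗᵢ[𝕜] K') (ψ : Kᗮ ≃ₗᵢ[𝕜] K'ᗮ)

@[simp]
theorem orthogonalCongr_apply_coe (x : K) : orthogonalCongr φ ψ x = φ x := by
  simp [orthogonalCongr]

@[simp]
theorem orthogonalCongr_apply_coe_orthogonal (y : Kᗮ) : orthogonalCongr φ ψ y = ψ y := by
  simp [orthogonalCongr]

theorem map_orthogonalCongr :
    K.map (orthogonalCongr φ ψ).toLinearEquiv.toLinearMap = K' := by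
  ext z
  refine ⟨?_, fun hz => ⟨φ.symm ⟨z, hz⟩, (φ.symm ⟨z, hz⟩).2, ?_⟩⟩
  · rintro ⟨x, hx, rfl⟩
    exact (orthogonalCongr_apply_coe φ ψ ⟨x, hx⟩).symm ▸ (φ ⟨x, hx⟩).2
  · simp

end LinearIsometryEquiv

theorem Submodule.finrank_orthogonal_eq_of_finrank_eq {𝕜 E : Type*} [RCLike 𝕜]
    [NormedAddCommGroup E] [InnerProductSpace 𝕜 E] [FiniteDimensional 𝕜 E] {p q : ℕ}
    (hE : finrank 𝕜 E = p + q) {K : Submodule 𝕜 E} (hK : finrank 𝕜 K = p) :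
    finrank 𝕜 Kᗮ = q := by
  have := K.finrank_add_finrank_orthogonal
  omega

theorem tangent_singular_values_eq_iff_general (p q : ℕ) (hpq : p ≤ q)
    (L L' : Submodule ℝ (EuclideanSpace ℝ (Fin (p + q))))
    (hL : finrank ℝ L = p) (hL' : finrank ℝ L' = p)
    (H : ↥L →ₗ[ℝ] ↥Lᗮ) (H' : ↥L' →ₗ[ℝ] ↥L'ᗮ)
    (ρ ρ' : Fin p → ℝ)
    (hρmono : Monotone ρ) (hρpos : ∀ i, 0 ≤ ρ i)
    (hρ : (LinearMap.charpoly (LinearMap.adjoint H ∘ₗ H)).roots =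
      Multiset.map (fun i => ρ i ^ 2) Finset.univ.val)
    (hρ'mono : Monotone ρ') (hρ'pos : ∀ i, 0 ≤ ρ' i)
    (hρ' : (LinearMap.charpoly (LinearMap.adjoint H' ∘ₗ H')).roots =
      Multiset.map (fun i => ρ' i ^ 2) Finset.univ.val) :
    (∀ j, ρ j = ρ' j) ↔
    (∃ g : EuclideanSpace ℝ (Fin (p + q)) ≃ₗᵢ[ℝ] EuclideanSpace ℝ (Fin (p + q)),
      L.map g.toLinearEquiv.toLinearMap = L' ∧
      ∀ (v : ↥L) (w : ↥L'), (w : EuclideanSpace ℝ (Fin (p + q))) = g v →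
        ((H' w : EuclideanSpace ℝ (Fin (p + q)))) = g (H v : EuclideanSpace ℝ (Fin (p + q)))) := by
  constructor
  · intro h
    obtain rfl : ρ = ρ' := funext h
    have hE : finrank ℝ (EuclideanSpace ℝ (Fin (p + q))) = p + q := finrank_euclideanSpace_fin
    obtain ⟨φ, ψ, hcomm⟩ := H.exists_linearIsometryEquiv_comp_eq_comp H' hpq hL hL'
      (Submodule.finrank_orthogonal_eq_of_finrank_eq hE hL)
      (Submodule.finrank_orthogonal_eq_of_finrank_eq hE hL') hρmono hρpos hρ hρ'
    refine ⟨φ.orthogonalCongr ψ, LinearIsometryEquiv.map_orthogonalCongr φ ψ, fun v w hw => ?_⟩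
    obtain rfl : w = φ v :=
      Subtype.ext (hw.trans (LinearIsometryEquiv.orthogonalCongr_apply_coe φ ψ v))
    rw [LinearIsometryEquiv.orthogonalCongr_apply_coe_orthogonal]
    exact congrArg Subtype.val (LinearMap.congr_fun hcomm v)
  · rintro ⟨g, hgL, hgH⟩
    obtain ⟨φ, ψ, hφ, hψ⟩ := g.exists_restrict_of_map_eq hgL
    have hcomm : H' ∘ₗ φ.toLinearMap = ψ.toLinearMap ∘ₗ H :=
      LinearMap.ext fun v => Subtype.ext ((hgH v (φ v) (hφ v)).trans (hψ (H v)).symm)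
    have hcharpoly := H.charpoly_adjoint_comp_self_eq_of_comp_eq_comp H' φ ψ hcomm
    exact congrFun (hρmono.eq_of_multiset_map_sq_eq hρ'mono hρpos hρ'pos
      (by rw [← hρ, ← hρ', hcharpoly]))

/-- Two tangent vectors `H : L → L^⊥`, `H' : L' → L'^⊥` to the Grassmannian have the same
singular values `ρ_1 ≤ … ≤ ρ_p` (encoded here as monotone nonnegative vectors whose squares
are, with multiplicity, the eigenvalues of `H*H` resp. `H'*H'`) if and only if some
`g ∈ O(p+q)` carries `(L,H)` to `(L',H')`. -/
theorem tangent_singular_values_eq_iff (p q : ℕ) (hp : 1 ≤ p) (hpq : p ≤ q)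
    (L L' : Submodule ℝ (EuclideanSpace ℝ (Fin (p + q))))
    (hL : finrank ℝ L = p) (hL' : finrank ℝ L' = p)
    (H : ↥L →ₗ[ℝ] ↥Lᗮ) (H' : ↥L' →ₗ[ℝ] ↥L'ᗮ)
    (ρ ρ' : Fin p → ℝ)
    (hρmono : Monotone ρ) (hρpos : ∀ i, 0 ≤ ρ i)
    (hρ : (LinearMap.charpoly (LinearMap.adjoint H ∘ₗ H)).roots =
      Multiset.map (fun i => ρ i ^ 2) Finset.univ.val)
    (hρ'mono : Monotone ρ') (hρ'pos : ∀ i, 0 ≤ ρ' i)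
    (hρ' : (LinearMap.charpoly (LinearMap.adjoint H' ∘ₗ H')).roots =
      Multiset.map (fun i => ρ' i ^ 2) Finset.univ.val) :
    (∀ j, ρ j = ρ' j) ↔
    (∃ g : EuclideanSpace ℝ (Fin (p + q)) ≃ₗᵢ[ℝ] EuclideanSpace ℝ (Fin (p + q)),
      L.map g.toLinearEquiv.toLinearMap = L' ∧
      ∀ (v : ↥L) (w : ↥L'), (w : EuclideanSpace ℝ (Fin (p + q))) = g v →
        ((H' w : EuclideanSpace ℝ (Fin (p + q)))) = g (H v : EuclideanSpace ℝ (Fin (p + q)))) :=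
  tangent_singular_values_eq_iff_general p q hpq L L' hL hL' H H' ρ ρ' hρmono hρpos hρ hρ'mono
    hρ'pos hρ'
end

section
/- The set of all quasistochastic p×p matrices is exactly the convex hull of the finite set of signed permutation matrices, i.e. of the matrices having exactly one nonzero entry in each row and each column, that entry being +1 or −1 (the matrices of the elements of W_p). -/
/-!
Quasistochastic means that `|A|` (entrywise) is doubly substochastic, and every doubly
substochastic matrix is dominated entrywise by a doubly stochastic matrix `S`. Then `A` lies in
the box `∏ [-S i j, S i j]`, whose vertices are the sign patterns `ε ⊙ S`. By Birkhoff's theorem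
`S` is a convex combination of permutation matrices `P σ`, so `ε ⊙ S` is a convex combination of
the signed permutation matrices `ε ⊙ P σ`. Conversely, the `ℓ¹` constraints cut out a convex set
containing every signed permutation matrix.
-/

open Finset

section

variable {𝕜 E ι : Type*} [Field 𝕜] [LinearOrder 𝕜] [IsStrictOrderedRing 𝕜]
  [AddCommGroup E] [Module 𝕜 E]

theorem convex_setOf_sum_abs_le (s : Finset ι) (f : ι → E →ₗ[𝕜] 𝕜) (c : 𝕜) :
    Convex 𝕜 {x | ∑ i ∈ s, |f i x| ≤ c} := by
  intro x hx y hy a b ha hb hab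
  calc ∑ i ∈ s, |f i (a • x + b • y)| ≤ ∑ i ∈ s, (a * |f i x| + b * |f i y|) := by
        refine sum_le_sum fun i _ => ?_
        rw [map_add, map_smul, map_smul, smul_eq_mul, smul_eq_mul]
        refine (abs_add_le _ _).trans_eq ?_
        rw [abs_mul, abs_mul, abs_of_nonneg ha, abs_of_nonneg hb]
    _ = a * ∑ i ∈ s, |f i x| + b * ∑ i ∈ s, |f i y| := by
        rw [sum_add_distrib, mul_sum, mul_sum]
    _ ≤ a * c + b * c := by gcongr <;> assumption
    _ = c := by rw [← add_mul, hab, one_mul]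

end

namespace Matrix

variable {R m n : Type*}

section Ring

variable [Ring R]

variable (R n) in
def signedPermMatrices [DecidableEq n] : Set (Matrix n n R) :=
  {A | ∃ (σ : Equiv.Perm n) (ε : n → R), (∀ j, ε j = 1 ∨ ε j = -1) ∧
    A = of fun i j => if i = σ j then ε j else 0}

theorem hadamard_permMatrix_mem_signedPermMatrices [Fintype n] [DecidableEq n]
    {ε : Matrix n n R} (hε : ∀ i j, ε i j = 1 ∨ ε i j = -1) (σ : Equiv.Perm n) :
    ε ⊙ σ.permMatrix R ∈ signedPermMatrices R n := by
  refine ⟨σ.symm, fun j => ε (σ.symm j) j, fun j => hε _ _, ?_⟩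
  ext i j
  by_cases h : i = σ.symm j
  · subst h; simp
  · simp [h, Equiv.toPEquiv_apply, ← σ.eq_symm_apply]

end Ring

variable [Field R] [LinearOrder R] [IsStrictOrderedRing R]

variable (R n) in
def quasistochastic [Fintype n] : Set (Matrix n n R) :=
  {A | (∀ k, ∑ i, |A i k| ≤ 1) ∧ ∀ l, ∑ j, |A l j| ≤ 1}

theorem convex_quasistochastic [Fintype n] : Convex R (quasistochastic R n) := by
  simp only [quasistochastic, Set.ofPred_and, Set.ofPred_forall]
  exact
    (convex_iInter fun k => convex_setOf_sum_abs_le _ (fun i => entryLinearMap R R i k) 1).inter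
    (convex_iInter fun l => convex_setOf_sum_abs_le _ (fun j => entryLinearMap R R l j) 1)

theorem signedPermMatrices_subset_quasistochastic [Fintype n] [DecidableEq n] :
    signedPermMatrices R n ⊆ quasistochastic R n := by
  rintro _ ⟨σ, ε, hε, rfl⟩
  have habs : ∀ j, |ε j| = 1 := fun j => by rcases hε j with h | h <;> simp [h]
  refine ⟨fun k => ?_, fun l => ?_⟩
  · rw [sum_eq_single (σ k) (fun i _ hi => by simp [hi]) (by simp)]
    simp [habs]
  · have hoff : ∀ j ≠ σ.symm l, |(of fun i j => if i = σ j then ε j else 0) l j| = 0 :=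
      fun j hj => by rw [of_apply, if_neg fun h => hj (by simp [h]), abs_zero]
    rw [sum_eq_single (σ.symm l) (fun j _ hj => hoff j hj) (by simp)]
    simp [habs]

/-- `S = M + r cᵀ / δ`, where `r` and `c` are the row and column deficits of `M`; both have the
same total `δ`. If `δ = 0` then `M` is already doubly stochastic, and the junk value `x / 0 = 0`
makes `S = M`. -/
theorem exists_mem_doublyStochastic_le [Fintype n] [DecidableEq n] {M : Matrix n n R}
    (h0 : ∀ i j, 0 ≤ M i j) (hrow : ∀ i, ∑ j, M i j ≤ 1) (hcol : ∀ j, ∑ i, M i j ≤ 1) :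
    ∃ S ∈ doublyStochastic R n, ∀ i j, M i j ≤ S i j := by
  set r : n → R := fun i => 1 - ∑ j, M i j
  set c : n → R := fun j => 1 - ∑ i, M i j
  set δ := ∑ i, r i
  have hr : ∀ i, 0 ≤ r i := fun i => sub_nonneg.2 (hrow i)
  have hc : ∀ j, 0 ≤ c j := fun j => sub_nonneg.2 (hcol j)
  have hδ : ∑ j, c j = δ := by
    simp only [c, r, δ, sum_sub_distrib, sum_comm (f := fun i j => M i j)]
  have hrow_add : ∀ i, ∑ j, r i * c j / δ = r i := fun i => by
    rw [← sum_div, ← mul_sum, hδ]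
    rcases eq_or_ne δ 0 with h | h
    · simp [(sum_eq_zero_iff_of_nonneg fun i _ => hr i).1 h i]
    · exact mul_div_cancel_right₀ _ h
  have hcol_add : ∀ j, ∑ i, r i * c j / δ = c j := fun j => by
    rw [← sum_div, ← sum_mul]
    rcases eq_or_ne δ 0 with h | h
    · simp [(sum_eq_zero_iff_of_nonneg fun j _ => hc j).1 (hδ.trans h) j]
    · exact mul_div_cancel_left₀ _ h
  have hadd : ∀ i j, 0 ≤ r i * c j / δ := fun i j =>
    div_nonneg (mul_nonneg (hr i) (hc j)) (sum_nonneg fun i _ => hr i)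
  refine ⟨M + of fun i j => r i * c j / δ, mem_doublyStochastic_iff_sum.2 ⟨?_, ?_, ?_⟩, ?_⟩
  · exact fun i j => add_nonneg (h0 i j) (hadd i j)
  · intro i
    simp only [add_apply, of_apply, sum_add_distrib, hrow_add, r, add_sub_cancel]
  · intro j
    simp only [add_apply, of_apply, sum_add_distrib, hcol_add, c, add_sub_cancel]
  · exact fun i j => le_add_of_nonneg_right (hadd i j)

theorem mem_convexHull_setOf_eq_neg_or_eq [Finite m] [Finite n] {A S : Matrix m n R}
    (h : ∀ i j, |A i j| ≤ S i j) :
    A ∈ convexHull R {B : Matrix m n R | ∀ i j, B i j = -S i j ∨ B i j = S i j} := by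
  have hbox : A ∈ convexHull R (Set.univ.pi fun i => Set.univ.pi fun j =>
      ({-S i j, S i j} : Set R) : Set (m → n → R)) :=
    mem_convexHull_pi fun i _ => by
      rw [convexHull_pi]
      intro j _
      show A i j ∈ convexHull R {-S i j, S i j}
      rw [convexHull_pair, segment_eq_Icc (neg_le_self ((abs_nonneg _).trans (h i j)))]
      exact abs_le.1 (h i j)
  refine convexHull_mono ?_ hbox
  intro B hB i j
  exact hB i trivial j trivial

theorem hadamard_mem_convexHull_signedPermMatrices [Fintype n] [DecidableEq n]
    {ε S : Matrix n n R} (hε : ∀ i j, ε i j = 1 ∨ ε i j = -1) (hS : S ∈ doublyStochastic R n) :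
    ε ⊙ S ∈ convexHull R (signedPermMatrices R n) := by
  have hlin : IsLinearMap R (ε ⊙ ·) :=
    ⟨fun B C => hadamard_add ε B C, fun c B => hadamard_smul ε B c⟩
  have hS' := doublyStochastic_eq_convexHull_permMatrix.subset hS
  refine convexHull_mono ?_ (hlin.image_convexHull _ ▸ Set.mem_image_of_mem _ hS')
  rintro _ ⟨_, ⟨σ, rfl⟩, rfl⟩
  exact hadamard_permMatrix_mem_signedPermMatrices hε σ

theorem mem_convexHull_signedPermMatrices_of_abs_le [Fintype n] [DecidableEq n]
    {A S : Matrix n n R} (hS : S ∈ doublyStochastic R n) (h : ∀ i j, |A i j| ≤ S i j) :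
    A ∈ convexHull R (signedPermMatrices R n) := by
  refine convexHull_min (fun B hB => ?_) (convex_convexHull R _)
    (mem_convexHull_setOf_eq_neg_or_eq h)
  set ε : Matrix n n R := of fun i j => if B i j = S i j then 1 else -1
  have hε : ∀ i j, ε i j = 1 ∨ ε i j = -1 := fun i j => by
    by_cases h' : B i j = S i j <;> simp [ε, h']
  convert hadamard_mem_convexHull_signedPermMatrices hε hS
  ext i j
  rcases hB i j with h' | h' <;> simp [ε, h']

theorem quasistochastic_eq_convexHull_signedPermMatrices [Fintype n] [DecidableEq n] :
    quasistochastic R n = convexHull R (signedPermMatrices R n) := by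
  refine subset_antisymm (fun A ⟨hcol, hrow⟩ => ?_)
    (convexHull_min signedPermMatrices_subset_quasistochastic convex_quasistochastic)
  obtain ⟨S, hS, hle⟩ :=
    exists_mem_doublyStochastic_le (M := of fun i j => |A i j|) (fun _ _ => abs_nonneg _)
      hrow hcol
  exact mem_convexHull_signedPermMatrices_of_abs_le hS hle

end Matrix

/-- The set of quasistochastic `p × p` matrices (all column and row `ℓ¹`-sums `≤ 1`) is
exactly the convex hull of the set of signed permutation matrices, i.e. of the matrices of
the elements of the group `W_p`. -/
theorem quasistochastic_eq_convexHull_signed_permutations (p : ℕ) :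
    {A : Matrix (Fin p) (Fin p) ℝ |
        (∀ k, ∑ i, |A i k| ≤ 1) ∧ (∀ l, ∑ j, |A l j| ≤ 1)} =
      convexHull ℝ {A : Matrix (Fin p) (Fin p) ℝ |
        ∃ (σ : Equiv.Perm (Fin p)) (ε : Fin p → ℝ),
          (∀ j, ε j = 1 ∨ ε j = -1) ∧
          A = Matrix.of fun i j => if i = σ j then ε j else 0} :=
  Matrix.quasistochastic_eq_convexHull_signedPermMatrices
end

section
/- Let A be a real p×q matrix (p ≤ q) and let λ = (λ_1,…,λ_p) be the vector of its singular values. Then the vector of diagonal entries (a_{11}, a_{22}, …, a_{pp}) lies in the convex hull of the W_p-orbit of λ. -/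
/-!
Diagonalizing `A Aᵀ = W diag(λ²) Wᵀ` with `W` orthogonal gives `A = W diag(λ) Y` with `Y` a
partial isometry (`Y Yᵀ Y = Y`), so `a_ii = ∑ k, M i k * λ k` with `M i k = W i k * Y k i`.
Cauchy–Schwarz and Bessel's inequality bound the row and column sums of `|M|` by `1`, so `|M|` lies
entrywise below a doubly stochastic matrix. Hence every linear functional `x` satisfies
`x (M λ) ≤ ∑ i k, |x i| D i k λ k`, which by Birkhoff's theorem is at most `∑ i, |x i| λ (σ i)` for
some permutation `σ`: the value of `x` at a signed permutation of `λ`. The convex hull of the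
finite orbit being closed, Hahn–Banach separation concludes.
-/

open Finset Matrix

section

variable {R : Type*} [Field R] [LinearOrder R] [IsStrictOrderedRing R] {n : Type*} [Fintype n]
  [DecidableEq n]

theorem exists_mem_doublyStochastic_le (D : Matrix n n R) (hD : ∀ i k, 0 ≤ D i k)
    (hrow : ∀ i, ∑ k, D i k ≤ 1) (hcol : ∀ k, ∑ i, D i k ≤ 1) :
    ∃ D' ∈ doublyStochastic R n, ∀ i k, D i k ≤ D' i k := by
  set r : n → R := fun i => 1 - ∑ k, D i k
  set c : n → R := fun k => 1 - ∑ i, D i k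
  set s : R := ∑ i, r i
  have hr : ∀ i, 0 ≤ r i := fun i => sub_nonneg.2 (hrow i)
  have hc : ∀ k, 0 ≤ c k := fun k => sub_nonneg.2 (hcol k)
  have hs : 0 ≤ s := sum_nonneg fun i _ => hr i
  have hcs : ∑ k, c k = s := by simp only [c, r, s, sum_sub_distrib, sum_comm (γ := n)]
  -- The defects add up to the same total `s`; spreading them by the rank-one matrix `r cᵀ / s`
  -- closes every row and column. When `s = 0` all defects vanish, and so does the correction.
  have cancel : ∀ {t : R}, 0 ≤ t → t ≤ s → t * s / s = t := fun {t} ht hts => by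
    rcases eq_or_ne s 0 with hs | hs
    · rw [hs, div_zero]; exact (le_antisymm (hs ▸ hts) ht).symm
    · exact mul_div_cancel_right₀ t hs
  refine ⟨D + of fun i k => r i * c k / s,
    mem_doublyStochastic_iff_sum.2 ⟨fun i k => ?_, fun i => ?_, fun k => ?_⟩, fun i k => ?_⟩
  · simp only [Matrix.add_apply, of_apply]
    exact add_nonneg (hD i k) (div_nonneg (mul_nonneg (hr i) (hc k)) hs)
  · simp only [Matrix.add_apply, of_apply, sum_add_distrib, ← sum_div, ← mul_sum, hcs]
    rw [cancel (hr i) (single_le_sum (fun i _ => hr i) (mem_univ i))]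
    ring
  · simp only [Matrix.add_apply, of_apply, sum_add_distrib, ← sum_div, mul_comm _ (c k), ← mul_sum]
    rw [cancel (hc k) (hcs ▸ single_le_sum (fun k _ => hc k) (mem_univ k))]
    ring
  · simp only [Matrix.add_apply, of_apply]
    exact le_add_of_nonneg_right (div_nonneg (mul_nonneg (hr i) (hc k)) hs)

theorem exists_perm_dotProduct_mulVec_le_of_mem_doublyStochastic {D : Matrix n n R}
    (hD : D ∈ doublyStochastic R n) (a b : n → R) :
    ∃ σ : Equiv.Perm n, a ⬝ᵥ D *ᵥ b ≤ ∑ i, a i * b (σ i) := by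
  rw [← SetLike.mem_coe, doublyStochastic_eq_convexHull_permMatrix] at hD
  have hconv : ConvexOn R Set.univ fun M : Matrix n n R => a ⬝ᵥ M *ᵥ b :=
    ⟨convex_univ, fun _ _ _ _ _ _ _ _ _ => le_of_eq <| by
      simp [add_mulVec, smul_mulVec, dotProduct_add, dotProduct_smul]⟩
  obtain ⟨_, ⟨σ, rfl⟩, hσ⟩ := hconv.exists_ge_of_mem_convexHull (Set.subset_univ _) hD
  exact ⟨σ, hσ.trans_eq (by simp [permMatrix_mulVec, dotProduct])⟩

end

theorem WOrbit_finite {p : ℕ} (v : Fin p → ℝ) : (WOrbit v).Finite := by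
  refine (Set.finite_range fun τ : Equiv.Perm (Fin p) × (Fin p → Bool) =>
    fun i => (if τ.2 i then 1 else -1) * v (τ.1 i)).subset ?_
  rintro _ ⟨σ, ε, hε, rfl⟩
  refine ⟨(σ, fun i => ε i = 1), funext fun i => ?_⟩
  rcases hε i with h | h <;> norm_num [h]

theorem WOrbit_comp_perm {p : ℕ} (v : Fin p → ℝ) (e : Equiv.Perm (Fin p)) :
    WOrbit (v ∘ e) = WOrbit v := by
  ext w
  constructor
  · rintro ⟨σ, ε, hε, rfl⟩
    exact ⟨σ.trans e, ε, hε, rfl⟩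
  · rintro ⟨σ, ε, hε, rfl⟩
    exact ⟨σ.trans e.symm, ε, hε, by simp⟩

theorem mulVec_mem_convexHull_WOrbit {p : ℕ} {μ : Fin p → ℝ} (hμ : 0 ≤ μ)
    {M : Matrix (Fin p) (Fin p) ℝ} (hrow : ∀ i, ∑ k, |M i k| ≤ 1)
    (hcol : ∀ k, ∑ i, |M i k| ≤ 1) :
    M *ᵥ μ ∈ convexHull ℝ (WOrbit μ) := by
  rw [← iInter_halfSpaces_eq (convex_convexHull ℝ _)
    ((WOrbit_finite μ).isCompact_convexHull (𝕜 := ℝ)).isClosed, Set.mem_iInter]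
  intro l
  set x : Fin p → ℝ := fun i => l fun j => if i = j then 1 else 0
  have hl : ∀ v, l v = x ⬝ᵥ v := fun v => by
    simpa [dotProduct, mul_comm] using l.toLinearMap.pi_apply_eq_sum_univ v
  obtain ⟨D, hD, hMD⟩ := exists_mem_doublyStochastic_le (fun i k => |M i k|)
    (fun _ _ => abs_nonneg _) hrow hcol
  obtain ⟨σ, hσ⟩ := exists_perm_dotProduct_mulVec_le_of_mem_doublyStochastic hD (|x|) μ
  set ε : Fin p → ℝ := fun i => if 0 ≤ x i then 1 else -1
  have hε : ∀ i, ε i * x i = |x i| := fun i => by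
    by_cases h : 0 ≤ x i
    · simp [ε, h, abs_of_nonneg h]
    · simp [ε, h, abs_of_neg (not_le.1 h)]
  refine ⟨fun i => ε i * μ (σ i),
    subset_convexHull ℝ _ ⟨σ, ε, fun i => by by_cases h : 0 ≤ x i <;> simp [ε, h], rfl⟩, ?_⟩
  rw [hl, hl]
  calc x ⬝ᵥ M *ᵥ μ = ∑ i, ∑ k, x i * M i k * μ k := by
        simp only [dotProduct, mulVec, mul_sum, mul_assoc]
    _ ≤ ∑ i, ∑ k, |x i| * D i k * μ k := by
        refine sum_le_sum fun i _ => sum_le_sum fun k _ => ?_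
        have hμk := hμ k
        calc x i * M i k * μ k ≤ |x i * M i k| * μ k := by gcongr; exact le_abs_self _
          _ ≤ |x i| * D i k * μ k := by rw [abs_mul]; gcongr; exact hMD i k
    _ = |x| ⬝ᵥ D *ᵥ μ := by simp only [dotProduct, mulVec, mul_sum, mul_assoc, Pi.abs_apply]
    _ ≤ ∑ i, |x i| * μ (σ i) := hσ
    _ = x ⬝ᵥ fun i => ε i * μ (σ i) := by
        simp only [dotProduct, ← hε]
        exact sum_congr rfl fun i _ => by ring

theorem sum_sq_le_one_of_mul_transpose_mul_eq_self {R : Type*} [CommRing R] [LinearOrder R]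
    [IsStrictOrderedRing R] {m n : Type*} [Fintype m] [Fintype n] {Y : Matrix m n R}
    (hY : Y * Yᵀ * Y = Y) (j : n) : ∑ k, Y k j ^ 2 ≤ 1 := by
  -- `P = Yᵀ Y` is a symmetric idempotent, so `P j j = ∑ l, P l j ^ 2 ≥ P j j ^ 2`.
  set P := Yᵀ * Y
  have hP : P * P = P := by rw [Matrix.mul_assoc, ← Matrix.mul_assoc Y, hY]
  have hsymm : ∀ l, P j l = P l j := fun l => by simp only [P, mul_apply, transpose_apply, mul_comm]
  have hsq : P j j ^ 2 ≤ P j j :=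
    calc P j j ^ 2 ≤ ∑ l, P l j ^ 2 := single_le_sum (f := fun l => P l j ^ 2)
          (fun _ _ => sq_nonneg _) (mem_univ j)
      _ = P j j := by
        conv_rhs => rw [← hP]
        simp only [mul_apply, hsymm, sq]
  have hjj : P j j = ∑ k, Y k j ^ 2 := by simp only [P, mul_apply, transpose_apply, sq]
  nlinarith

theorem sum_abs_mul_le_one {ι : Type*} (s : Finset ι) {f g : ι → ℝ}
    (hf : ∑ i ∈ s, f i ^ 2 ≤ 1) (hg : ∑ i ∈ s, g i ^ 2 ≤ 1) : ∑ i ∈ s, |f i * g i| ≤ 1 :=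
  calc ∑ i ∈ s, |f i * g i| = ∑ i ∈ s, |f i| * |g i| := by simp only [abs_mul]
    _ ≤ √(∑ i ∈ s, |f i| ^ 2) * √(∑ i ∈ s, |g i| ^ 2) := Real.sum_mul_le_sqrt_mul_sqrt _ _ _
    _ ≤ 1 := by
      simp only [sq_abs]
      exact mul_le_one₀ (Real.sqrt_le_one.2 hf) (Real.sqrt_nonneg _) (Real.sqrt_le_one.2 hg)

theorem sum_sq_row_eq_one_of_mem_unitaryGroup {m : Type*} [Fintype m] [DecidableEq m]
    {W : Matrix m m ℝ} (hW : W ∈ unitaryGroup m ℝ) (i : m) : ∑ k, W i k ^ 2 = 1 := by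
  simpa [mul_apply, sq] using congrFun (congrFun (mem_unitaryGroup_iff.1 hW) i) i

theorem sum_sq_col_eq_one_of_mem_unitaryGroup {m : Type*} [Fintype m] [DecidableEq m]
    {W : Matrix m m ℝ} (hW : W ∈ unitaryGroup m ℝ) (k : m) : ∑ i, W i k ^ 2 = 1 := by
  simpa [mul_apply, sq] using congrFun (congrFun (mem_unitaryGroup_iff'.1 hW) k) k

section

variable {m n : Type*} [Fintype m] [Fintype n] [DecidableEq m] {W : Matrix m m ℝ}
  {Y : Matrix m n ℝ} {c : m → n}

theorem sum_abs_mul_row_le_one (hW : W ∈ unitaryGroup m ℝ) (hY : Y * Yᵀ * Y = Y) (i : m) :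
    ∑ k, |W i k * Y k (c i)| ≤ 1 :=
  sum_abs_mul_le_one _ (sum_sq_row_eq_one_of_mem_unitaryGroup hW i).le
    (sum_sq_le_one_of_mul_transpose_mul_eq_self hY (c i))

theorem sum_abs_mul_col_le_one (hW : W ∈ unitaryGroup m ℝ) (hY : Y * Yᵀ * Y = Y)
    (hc : Function.Injective c) (k : m) : ∑ i, |W i k * Y k (c i)| ≤ 1 := by
  have hYt : Yᵀ * Yᵀᵀ * Yᵀ = Yᵀ := by
    simpa only [transpose_mul, transpose_transpose, Matrix.mul_assoc] using congrArg transpose hY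
  refine sum_abs_mul_le_one _ (sum_sq_col_eq_one_of_mem_unitaryGroup hW k).le ?_
  calc ∑ i, Y k (c i) ^ 2 = ∑ j ∈ univ.map ⟨c, hc⟩, Y k j ^ 2 :=
        (sum_map univ ⟨c, hc⟩ fun j => Y k j ^ 2).symm
    _ ≤ ∑ j, Y k j ^ 2 := sum_le_univ_sum_of_nonneg fun _ => sq_nonneg _
    _ ≤ 1 := sum_sq_le_one_of_mul_transpose_mul_eq_self hYt k

end

theorem exists_mul_transpose_mul_eq_self_of_mul_transpose_eq_diagonal {R : Type*} [Field R]
    [LinearOrder R] [IsStrictOrderedRing R] {m n : Type*} [Fintype m] [Fintype n] [DecidableEq m]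
    {B : Matrix m n R} {s : m → R} (hB : B * Bᵀ = diagonal fun k => s k ^ 2) :
    ∃ Y : Matrix m n R, Y * Yᵀ * Y = Y ∧ B = diagonal s * Y := by
  refine ⟨diagonal s⁻¹ * B, ?_, ?_⟩
  · -- `x⁻¹ * x ^ 2 * x⁻¹ * x⁻¹ = x⁻¹` holds also at `x = 0`, since `0⁻¹ = 0`.
    calc diagonal s⁻¹ * B * (diagonal s⁻¹ * B)ᵀ * (diagonal s⁻¹ * B)
        = diagonal s⁻¹ * (B * Bᵀ) * diagonal s⁻¹ * diagonal s⁻¹ * B := by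
          simp only [transpose_mul, diagonal_transpose, Matrix.mul_assoc]
      _ = diagonal s⁻¹ * B := by
          rw [hB, diagonal_mul_diagonal, diagonal_mul_diagonal, diagonal_mul_diagonal]
          congr 2
          funext k
          rcases eq_or_ne (s k) 0 with hk | hk
          · simp [hk]
          · simp only [Pi.inv_apply]; field_simp
  · -- A row of `B` with `s k = 0` has zero squared norm.
    ext k j
    rw [← Matrix.mul_assoc, diagonal_mul_diagonal, diagonal_mul]
    rcases eq_or_ne (s k) 0 with hk | hk
    · have hrow : B k = 0 := dotProduct_self_eq_zero.1 <| by
        simpa [hk, mul_apply, dotProduct] using congrFun (congrFun hB k) k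
      simp [hrow]
    · simp [hk]

theorem exists_unitary_mul_diagonal_mul_eq {m n : Type*} [Fintype m] [Fintype n]
    [DecidableEq m] (A : Matrix m n ℝ) :
    ∃ W ∈ unitaryGroup m ℝ, ∃ Y : Matrix m n ℝ, Y * Yᵀ * Y = Y ∧
      A = W * diagonal (fun k => √((isHermitian_mul_conjTranspose_self A).eigenvalues k)) * Y := by
  set hH := isHermitian_mul_conjTranspose_self A
  set W : Matrix m m ℝ := (hH.eigenvectorUnitary : Matrix m m ℝ)
  have hB : star W * A * (star W * A)ᵀ = diagonal fun k => √(hH.eigenvalues k) ^ 2 := by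
    have hd := hH.conjStarAlgAut_star_eigenvectorUnitary
    simp only [Unitary.conjStarAlgAut_apply, Unitary.coe_star, star_star,
      RCLike.ofReal_real_eq_id, Function.id_comp] at hd
    have hsq : (fun k => √(hH.eigenvalues k) ^ 2) = hH.eigenvalues :=
      funext fun k => Real.sq_sqrt (eigenvalues_self_mul_conjTranspose_nonneg A k)
    rw [hsq, ← hd, ← conjTranspose_eq_transpose_of_trivial, conjTranspose_mul,
      ← star_eq_conjTranspose (star W), star_star]
    simp only [W, Matrix.mul_assoc]
  obtain ⟨Y, hY, hBY⟩ := exists_mul_transpose_mul_eq_self_of_mul_transpose_eq_diagonal hB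
  refine ⟨W, hH.eigenvectorUnitary.2, Y, hY, ?_⟩
  rw [Matrix.mul_assoc, ← hBY, ← Matrix.mul_assoc, mem_unitaryGroup_iff.1 hH.eigenvectorUnitary.2,
    Matrix.one_mul]

/-- For a real `p × q` matrix `A` (`p ≤ q`) with singular values `λ`, the vector of diagonal
entries `(a_{11}, …, a_{pp})` lies in the convex hull of the `W_p`-orbit of `λ`. -/
theorem diag_mem_convexHull_WOrbit_singularValues (p q : ℕ) (hpq : p ≤ q)
    (A : Matrix (Fin p) (Fin q) ℝ) :
    (fun i : Fin p => A i (Fin.castLE hpq i)) ∈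
      convexHull ℝ (WOrbit (matSingVals A)) := by
  set μ : Fin p → ℝ := fun k => √((isHermitian_mul_conjTranspose_self A).eigenvalues k)
  have hsing : WOrbit (matSingVals A) = WOrbit μ :=
    WOrbit_comp_perm μ (Fin.revPerm.trans (Tuple.sort μ))
  obtain ⟨W, hW, Y, hY, hA⟩ := exists_unitary_mul_diagonal_mul_eq A
  set M : Matrix (Fin p) (Fin p) ℝ := of fun i k => W i k * Y k (Fin.castLE hpq i)
  have hdiag : (fun i => A i (Fin.castLE hpq i)) = M *ᵥ μ := by
    ext i
    rw [hA, mul_apply]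
    simp only [mul_diagonal, mulVec, dotProduct, M, of_apply]
    exact sum_congr rfl fun k _ => by ring
  rw [hsing, hdiag]
  exact mulVec_mem_convexHull_WOrbit (fun k => Real.sqrt_nonneg _)
    (sum_abs_mul_row_le_one hW hY) (sum_abs_mul_col_le_one hW hY (Fin.castLE_injective hpq))
end

section
/- (Lidskii's theorem.) Let X and Y be Hermitian n×n complex matrices, and for a Hermitian matrix A let λ(A) ∈ ℝ^n denote the vector of its eigenvalues listed in decreasing order with multiplicity. Then λ(X + Y) lies in λ(X) + Z, where Z ⊂ ℝ^n is the convex hull of the set of all vectors obtained from λ(Y) by permuting its coordinates. -/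
/-!
Let `t` be the `(m + 1)`-st largest eigenvalue of `Y` and `P` the positive part of `Y - t`, which
has the eigenvectors of `Y`. Since `Y ≤ P + t` and `0 ≤ P` in the Loewner order, Courant–Fischer
gives `λ(X + Y) ≤ λ(X + P) + t` and `λ(X) ≤ λ(X + P)` coordinatewise, so for any set `I` of `m + 1`
indices `∑_{i ∈ I} (λ_i(X + Y) - λ_i(X)) ≤ ∑_i (λ_i(X + P) - λ_i(X)) + (m + 1) t = tr P + (m + 1) t`,
which is the sum of the `m + 1` largest eigenvalues of `Y`. Thus `λ(X + Y) - λ(X)` is majorized by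
`λ(Y)`, and a vector majorized by `y` lies in the convex hull of the permutations of `y` (Rado): a
linear functional separating it from that hull would contradict the rearrangement inequality
combined with summation by parts.
-/

open Finset Module Matrix
open scoped InnerProductSpace

section Rearrangement

variable {n : ℕ}

noncomputable def sortDescPerm (v : Fin n → ℝ) : Equiv.Perm (Fin n) :=
  Fin.revPerm.trans (Tuple.sort v)

theorem sortDesc_eq_comp (v : Fin n → ℝ) : sortDesc v = v ∘ sortDescPerm v := rfl

theorem antitone_sortDesc (v : Fin n → ℝ) : Antitone (sortDesc v) :=
  fun _ _ hij => Tuple.monotone_sort v (Fin.rev_le_rev.mpr hij)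

theorem sum_sortDesc (v : Fin n → ℝ) : ∑ i, sortDesc v i = ∑ i, v i := by
  rw [sortDesc_eq_comp]
  exact Equiv.sum_comp _ v

theorem sortDesc_eq_comp_of_antitone {v : Fin n → ℝ} (σ : Equiv.Perm (Fin n))
    (h : Antitone (v ∘ σ)) : sortDesc v = v ∘ σ := by
  have hsort := antitone_sortDesc v
  rw [sortDesc_eq_comp] at hsort ⊢
  exact Tuple.unique_antitone hsort h

theorem exists_card_eq_sum_Iic_sortDesc (v : Fin n → ℝ) (m : Fin n) :
    ∃ I : Finset (Fin n), #I = m + 1 ∧ ∑ j ∈ Iic m, sortDesc v j = ∑ i ∈ I, v i :=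
  ⟨(Iic m).map (sortDescPerm v).toEmbedding, by simp, by simp [sum_map, sortDesc_eq_comp]⟩

theorem Antitone.sum_max_sub_eq_sum_Iic {y : Fin n → ℝ} (hy : Antitone y) (m : Fin n) :
    ∑ j, max (y j - y m) 0 = ∑ j ∈ Iic m, y j - (m + 1) * y m := by
  rw [← sum_subset (subset_univ (Iic m)) fun j _ hj =>
      max_eq_right (sub_nonpos.mpr (hy (not_le.mp (mt mem_Iic.mpr hj)).le)),
    sum_congr rfl fun j hj => max_eq_left (sub_nonneg.mpr (hy (mem_Iic.mp hj))),
    sum_sub_distrib, sum_const, Fin.card_Iic, nsmul_eq_mul]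
  push_cast
  ring

theorem sum_mul_le_sum_sortDesc_mul (c z : Fin n → ℝ) :
    ∑ j, c j * z j ≤ ∑ j, sortDesc c j * sortDesc z j := by
  have hmono := (antitone_sortDesc c).monovary (antitone_sortDesc z)
  calc ∑ j, c j * z j
      = ∑ j, sortDesc c j * sortDesc z (((sortDescPerm z)⁻¹ * sortDescPerm c) j) := by
        rw [← Equiv.sum_comp (sortDescPerm c)]
        simp [sortDesc_eq_comp]
    _ ≤ _ := hmono.sum_mul_comp_perm_le_sum_mul

theorem Fin.sum_Iic_eq_sum_range {M : Type*} [AddCommMonoid M] (f : ℕ → M) (m : Fin n) :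
    ∑ j ∈ Iic m, f j = ∑ k ∈ range (m + 1), f k := by
  rw [Nat.range_succ_eq_Iic, ← Fin.map_valEmbedding_Iic, sum_map]
  rfl

theorem sum_mul_nonpos_of_sum_Iic_nonpos {d b : Fin n → ℝ} (hd : Antitone d)
    (hb : ∀ m, ∑ j ∈ Iic m, b j ≤ 0) (hsum : ∑ j, b j = 0) : ∑ j, d j * b j ≤ 0 := by
  set D : ℕ → ℝ := fun k => if h : k < n then d ⟨k, h⟩ else 0
  set B : ℕ → ℝ := fun k => if h : k < n then b ⟨k, h⟩ else 0
  have hD (j : Fin n) : D j = d j := dif_pos j.isLt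
  have hB (j : Fin n) : B j = b j := dif_pos j.isLt
  have hBsum : ∑ k ∈ range n, B k = 0 := by
    simpa [← Fin.sum_univ_eq_sum_range, hB] using hsum
  have hBpartial (k : ℕ) (hk : k < n) : ∑ i ∈ range (k + 1), B i ≤ 0 :=
    calc ∑ i ∈ range (k + 1), B i = ∑ j ∈ Iic (⟨k, hk⟩ : Fin n), B j :=
          (Fin.sum_Iic_eq_sum_range B (⟨k, hk⟩ : Fin n)).symm
      _ = ∑ j ∈ Iic (⟨k, hk⟩ : Fin n), b j := by simp only [hB]
      _ ≤ 0 := hb _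
  have hDanti (k : ℕ) (hk : k + 1 < n) : D (k + 1) ≤ D k := by
    simpa [D, hk, (Nat.lt_succ_self k).trans hk] using hd (Fin.mk_le_mk.mpr k.le_succ)
  rw [show ∑ j, d j * b j = ∑ k ∈ range n, D k • B k by
    simp [← Fin.sum_univ_eq_sum_range, hD, hB], sum_range_by_parts, hBsum, smul_zero, zero_sub,
    neg_nonpos]
  refine sum_nonneg fun k hk => ?_
  have hk : k + 1 < n := by have := mem_range.mp hk; omega
  exact smul_nonneg_of_nonpos_of_nonpos (sub_nonpos.mpr (hDanti k hk)) (hBpartial k (by omega))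

theorem sum_mul_le_sum_sortDesc_mul_of_sum_Iic_le {y z : Fin n → ℝ}
    (h : ∀ m, ∑ j ∈ Iic m, sortDesc z j ≤ ∑ j ∈ Iic m, y j) (hsum : ∑ j, z j = ∑ j, y j)
    (c : Fin n → ℝ) : ∑ j, c j * z j ≤ ∑ j, sortDesc c j * y j := by
  have habel : ∑ j, sortDesc c j * (sortDesc z j - y j) ≤ 0 :=
    sum_mul_nonpos_of_sum_Iic_nonpos (antitone_sortDesc c)
      (fun m => by simpa [sum_sub_distrib] using h m)
      (by rw [sum_sub_distrib, sum_sortDesc, hsum, sub_self])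
  simp only [mul_sub, sum_sub_distrib] at habel
  linarith [sum_mul_le_sum_sortDesc_mul c z]

theorem mem_convexHull_perm_of_sum_Iic_le {y z : Fin n → ℝ}
    (h : ∀ m, ∑ j ∈ Iic m, sortDesc z j ≤ ∑ j ∈ Iic m, y j) (hsum : ∑ j, z j = ∑ j, y j) :
    z ∈ convexHull ℝ {w | ∃ σ : Equiv.Perm (Fin n), w = y ∘ σ} := by
  set T := {w | ∃ σ : Equiv.Perm (Fin n), w = y ∘ σ}
  have hT : T.Finite := by
    simpa [T, eq_comm, Set.range] using Set.finite_range fun σ : Equiv.Perm (Fin n) => y ∘ σ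
  by_contra hz
  obtain ⟨f, u, hfT, hfz⟩ := geometric_hahn_banach_closed_point (convex_convexHull ℝ T)
    (hT.isCompact_convexHull (𝕜 := ℝ)).isClosed hz
  set c : Fin n → ℝ := fun j => f (Pi.single j 1)
  have hf (w : Fin n → ℝ) : f w = ∑ j, c j * w j := by
    conv_lhs => rw [pi_eq_sum_univ' w, map_sum]
    simp [c, mul_comm]
  set ρ := sortDescPerm c
  have hρ : f (y ∘ ⇑ρ⁻¹) = ∑ j, sortDesc c j * y j := by
    rw [hf, ← Equiv.sum_comp ρ]
    simp [sortDesc_eq_comp, ρ]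
  have := hfT _ (subset_convexHull ℝ T ⟨ρ⁻¹, rfl⟩)
  rw [hρ] at this
  rw [hf] at hfz
  linarith [sum_mul_le_sum_sortDesc_mul_of_sum_Iic_le h hsum c]

end Rearrangement

namespace OrthonormalBasis

variable {𝕜 E ι : Type*} [RCLike 𝕜] [NormedAddCommGroup E] [InnerProductSpace 𝕜 E] [Fintype ι]
  (b : OrthonormalBasis ι 𝕜 E)

theorem re_inner_apply_eq_sum {T : E →ₗ[𝕜] E} {μ : ι → ℝ}
    (hT : ∀ i, T (b i) = (μ i : 𝕜) • b i) (x : E) :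
    RCLike.re ⟪x, T x⟫_𝕜 = ∑ i, μ i * ‖⟪b i, x⟫_𝕜‖ ^ 2 := by
  nth_rw 2 [← b.sum_repr' x]
  simp only [map_sum, map_smul, hT, inner_sum, inner_smul_right]
  refine sum_congr rfl fun i _ => ?_
  rw [mul_left_comm, ← inner_conj_symm x (b i), RCLike.mul_conj]
  norm_cast

theorem finrank_span_image (S : Finset ι) :
    finrank 𝕜 (Submodule.span 𝕜 (b '' S)) = #S := by
  rw [Set.image_eq_range, finrank_span_eq_card (b := fun i : (S : Set ι) => b i)
    (b.orthonormal.linearIndependent.comp _ Subtype.val_injective)]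
  simp

theorem inner_eq_zero_of_mem_span_image {S : Set ι} {x : E}
    (hx : x ∈ Submodule.span 𝕜 (b '' S)) {j : ι} (hj : j ∉ S) : ⟪b j, x⟫_𝕜 = 0 := by
  induction hx using Submodule.span_induction with
  | mem y hy =>
    obtain ⟨i, hi, rfl⟩ := hy
    exact b.orthonormal.inner_eq_zero (ne_of_mem_of_not_mem hi hj).symm
  | zero => exact inner_zero_right _
  | add y z _ _ hy hz => rw [inner_add_right, hy, hz, add_zero]
  | smul c y _ hy => rw [inner_smul_right, hy, mul_zero]

variable {T : E →ₗ[𝕜] E} {μ : ι → ℝ} {S : Set ι} {c : ℝ} {x : E}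

theorem mul_norm_sq_le_re_inner_of_mem_span (hT : ∀ i, T (b i) = (μ i : 𝕜) • b i)
    (hx : x ∈ Submodule.span 𝕜 (b '' S)) (hc : ∀ i ∈ S, c ≤ μ i) :
    c * ‖x‖ ^ 2 ≤ RCLike.re ⟪x, T x⟫_𝕜 := by
  rw [b.re_inner_apply_eq_sum hT, ← b.sum_sq_norm_inner_right, mul_sum]
  refine sum_le_sum fun i _ => ?_
  by_cases hi : i ∈ S
  · exact mul_le_mul_of_nonneg_right (hc i hi) (by positivity)
  · simp [b.inner_eq_zero_of_mem_span_image hx hi]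

theorem re_inner_le_mul_norm_sq_of_mem_span (hT : ∀ i, T (b i) = (μ i : 𝕜) • b i)
    (hx : x ∈ Submodule.span 𝕜 (b '' S)) (hc : ∀ i ∈ S, μ i ≤ c) :
    RCLike.re ⟪x, T x⟫_𝕜 ≤ c * ‖x‖ ^ 2 := by
  rw [b.re_inner_apply_eq_sum hT, ← b.sum_sq_norm_inner_right, mul_sum]
  refine sum_le_sum fun i _ => ?_
  by_cases hi : i ∈ S
  · exact mul_le_mul_of_nonneg_right (hc i hi) (by positivity)
  · simp [b.inner_eq_zero_of_mem_span_image hx hi]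

end OrthonormalBasis

namespace LinearMap.IsSymmetric

variable {𝕜 E : Type*} [RCLike 𝕜] [NormedAddCommGroup E] [InnerProductSpace 𝕜 E]
  [FiniteDimensional 𝕜 E] {T T' : E →ₗ[𝕜] E}

theorem eigenvalues_eq_comp_finCast (hT : T.IsSymmetric) {m n : ℕ} (hm : finrank 𝕜 E = m)
    (hn : finrank 𝕜 E = n) :
    hT.eigenvalues hm = hT.eigenvalues hn ∘ Fin.cast (hm.symm.trans hn) := by
  subst hm hn
  rfl

/-- Courant–Fischer: the span of the top `i + 1` eigenvectors of `T` meets the span of the bottom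
`n - i` eigenvectors of `T'` nontrivially. -/
theorem eigenvalues_le_add_of_re_inner_le (hT : T.IsSymmetric) (hT' : T'.IsSymmetric) {n : ℕ}
    (hn : finrank 𝕜 E = n) {t : ℝ}
    (h : ∀ x, RCLike.re ⟪x, T x⟫_𝕜 ≤ RCLike.re ⟪x, T' x⟫_𝕜 + t * ‖x‖ ^ 2) (i : Fin n) :
    hT.eigenvalues hn i ≤ hT'.eigenvalues hn i + t := by
  set b := hT.eigenvectorBasis hn
  set b' := hT'.eigenvectorBasis hn
  set V := Submodule.span 𝕜 (b '' ↑(Iic i))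
  set W := Submodule.span 𝕜 (b' '' ↑(Ici i))
  have hVW : ¬ Disjoint V W := fun hdisj => by
    have := Submodule.finrank_add_finrank_le_of_disjoint hdisj
    rw [b.finrank_span_image, b'.finrank_span_image, Fin.card_Iic, Fin.card_Ici, hn] at this
    omega
  obtain ⟨x, hxV, hxW, hx⟩ : ∃ x ∈ V, x ∈ W ∧ x ≠ 0 := by
    simpa [Submodule.disjoint_def] using hVW
  have hlow : hT.eigenvalues hn i * ‖x‖ ^ 2 ≤ RCLike.re ⟪x, T x⟫_𝕜 :=
    b.mul_norm_sq_le_re_inner_of_mem_span (hT.apply_eigenvectorBasis hn) hxV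
      fun j hj => hT.eigenvalues_antitone hn (mem_Iic.mp hj)
  have hup : RCLike.re ⟪x, T' x⟫_𝕜 ≤ hT'.eigenvalues hn i * ‖x‖ ^ 2 :=
    b'.re_inner_le_mul_norm_sq_of_mem_span (hT'.apply_eigenvectorBasis hn) hxW
      fun j hj => hT'.eigenvalues_antitone hn (mem_Ici.mp hj)
  have hpos : 0 < ‖x‖ ^ 2 := by positivity
  nlinarith [h x]

end LinearMap.IsSymmetric

namespace Matrix.IsHermitian

section Eigenbasis

variable {𝕜 ι : Type*} [RCLike 𝕜] [Fintype ι] [DecidableEq ι] {A : Matrix ι ι 𝕜}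
  (hA : A.IsHermitian)

theorem toEuclideanLin_eigenvectorBasis (j : ι) :
    toEuclideanLin A (hA.eigenvectorBasis j) = (hA.eigenvalues j : 𝕜) • hA.eigenvectorBasis j := by
  ext1
  rw [toLpLin_apply, WithLp.ofLp_toLp, hA.mulVec_eigenvectorBasis, WithLp.ofLp_smul,
    RCLike.real_smul_eq_coe_smul (K := 𝕜)]

noncomputable def withEigenvalues (d : ι → ℝ) : Matrix ι ι 𝕜 :=
  Unitary.conjStarAlgAut 𝕜 _ hA.eigenvectorUnitary (diagonal (RCLike.ofReal ∘ d))

theorem isHermitian_withEigenvalues (d : ι → ℝ) : (hA.withEigenvalues d).IsHermitian := by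
  rw [withEigenvalues, Unitary.conjStarAlgAut_apply]
  exact isHermitian_mul_mul_conjTranspose _
    (isHermitian_diagonal_iff.mpr fun i => by simp [IsSelfAdjoint])

theorem toEuclideanLin_withEigenvalues_eigenvectorBasis (d : ι → ℝ) (j : ι) :
    toEuclideanLin (hA.withEigenvalues d) (hA.eigenvectorBasis j) =
      (d j : 𝕜) • hA.eigenvectorBasis j := by
  ext1
  simp [toLpLin_apply, withEigenvalues, Unitary.conjStarAlgAut_apply,
    star_eigenvectorUnitary_mulVec]

theorem trace_withEigenvalues (d : ι → ℝ) : (hA.withEigenvalues d).trace = ∑ j, (d j : 𝕜) := by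
  rw [withEigenvalues, Unitary.conjStarAlgAut_apply, trace_mul_cycle, Unitary.coe_star_mul_self,
    one_mul, trace_diagonal]
  rfl

theorem re_inner_toEuclideanLin_le_withEigenvalues_add {d : ι → ℝ} {t : ℝ}
    (hd : ∀ j, hA.eigenvalues j ≤ d j + t) (x : EuclideanSpace 𝕜 ι) :
    RCLike.re ⟪x, toEuclideanLin A x⟫_𝕜 ≤
      RCLike.re ⟪x, toEuclideanLin (hA.withEigenvalues d) x⟫_𝕜 + t * ‖x‖ ^ 2 := by
  set b := hA.eigenvectorBasis
  rw [b.re_inner_apply_eq_sum hA.toEuclideanLin_eigenvectorBasis,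
    b.re_inner_apply_eq_sum (hA.toEuclideanLin_withEigenvalues_eigenvectorBasis d),
    ← b.sum_sq_norm_inner_right, mul_sum, ← sum_add_distrib]
  gcongr with j
  rw [← add_mul]
  exact mul_le_mul_of_nonneg_right (hd j) (by positivity)

theorem re_inner_toEuclideanLin_withEigenvalues_nonneg {d : ι → ℝ} (hd : 0 ≤ d)
    (x : EuclideanSpace 𝕜 ι) : 0 ≤ RCLike.re ⟪x, toEuclideanLin (hA.withEigenvalues d) x⟫_𝕜 := by
  rw [hA.eigenvectorBasis.re_inner_apply_eq_sum
    (hA.toEuclideanLin_withEigenvalues_eigenvectorBasis d)]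
  exact sum_nonneg fun j _ => mul_nonneg (hd j) (by positivity)

end Eigenbasis

variable {𝕜 : Type*} [RCLike 𝕜] {n : ℕ} {A B : Matrix (Fin n) (Fin n) 𝕜}

/-- `hA.eigenvalues` is the sorted spectrum of `toEuclideanLin A` reindexed along an arbitrary
`Fin (Fintype.card (Fin n)) ≃ Fin n`, so only its decreasing rearrangement is canonical. -/
theorem sortDesc_eigenvalues (hA : A.IsHermitian) :
    sortDesc hA.eigenvalues =
      (isSymmetric_toEuclideanLin_iff.mpr hA).eigenvalues finrank_euclideanSpace_fin := by
  set e : Fin (Fintype.card (Fin n)) ≃ Fin n := Fintype.equivOfCardEq (Fintype.card_fin _)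
  have h : hA.eigenvalues ∘ ((finCongr (Fintype.card_fin n).symm).trans e) =
      (isSymmetric_toEuclideanLin_iff.mpr hA).eigenvalues finrank_euclideanSpace_fin := by
    ext j
    simp only [eigenvalues, eigenvalues₀, e, Function.comp_apply, Equiv.trans_apply,
      Equiv.symm_apply_apply]
    rw [(isSymmetric_toEuclideanLin_iff.mpr hA).eigenvalues_eq_comp_finCast
      finrank_euclideanSpace finrank_euclideanSpace_fin, Function.comp_apply]
    congr 1
  rw [sortDesc_eq_comp_of_antitone _ (h ▸ LinearMap.IsSymmetric.eigenvalues_antitone _ _), h]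

theorem sum_sortDesc_eigenvalues (hA : A.IsHermitian) :
    ∑ i, sortDesc hA.eigenvalues i = RCLike.re A.trace := by
  simp [sum_sortDesc, hA.trace_eq_sum_eigenvalues]

theorem sortDesc_eigenvalues_le_add (hA : A.IsHermitian) (hB : B.IsHermitian) {t : ℝ}
    (h : ∀ x, RCLike.re ⟪x, toEuclideanLin A x⟫_𝕜 ≤
      RCLike.re ⟪x, toEuclideanLin B x⟫_𝕜 + t * ‖x‖ ^ 2) (i : Fin n) :
    sortDesc hA.eigenvalues i ≤ sortDesc hB.eigenvalues i + t := by
  rw [hA.sortDesc_eigenvalues, hB.sortDesc_eigenvalues]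
  exact LinearMap.IsSymmetric.eigenvalues_le_add_of_re_inner_le _ _ _ h i

end Matrix.IsHermitian

section Lidskii

open Matrix.IsHermitian

variable {𝕜 : Type*} [RCLike 𝕜] {n : ℕ} {X Y : Matrix (Fin n) (Fin n) 𝕜}

theorem sum_sortDesc_eigenvalues_add_sub_le (hX : X.IsHermitian) (hY : Y.IsHermitian)
    {I : Finset (Fin n)} {m : Fin n} (hI : #I = m + 1) :
    ∑ i ∈ I, (sortDesc (hX.add hY).eigenvalues i - sortDesc hX.eigenvalues i) ≤
      ∑ j ∈ Iic m, sortDesc hY.eigenvalues j := by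
  set t := sortDesc hY.eigenvalues m
  set d : Fin n → ℝ := fun j => max (hY.eigenvalues j - t) 0
  have hP := hY.isHermitian_withEigenvalues d
  have hYP (i : Fin n) : sortDesc (hX.add hY).eigenvalues i ≤
      sortDesc (hX.add hP).eigenvalues i + t :=
    sortDesc_eigenvalues_le_add _ _ (fun x => by
      simpa [inner_add_right, add_assoc] using hY.re_inner_toEuclideanLin_le_withEigenvalues_add
        (fun j => by linarith [le_max_left (hY.eigenvalues j - t) 0]) x) i
  have hXP (i : Fin n) : sortDesc hX.eigenvalues i ≤ sortDesc (hX.add hP).eigenvalues i := by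
    simpa using sortDesc_eigenvalues_le_add hX (hX.add hP) (t := 0) (fun x => by
      simpa [inner_add_right] using
        hY.re_inner_toEuclideanLin_withEigenvalues_nonneg (fun j => le_max_right _ _) x) i
  have htrace : ∑ i, (sortDesc (hX.add hP).eigenvalues i - sortDesc hX.eigenvalues i) =
      ∑ j, d j := by
    rw [sum_sub_distrib, sum_sortDesc_eigenvalues, sum_sortDesc_eigenvalues, trace_add, map_add,
      trace_withEigenvalues]
    simp
  have hd : ∑ j, d j = ∑ j ∈ Iic m, sortDesc hY.eigenvalues j - (m + 1) * t := by
    rw [← (antitone_sortDesc _).sum_max_sub_eq_sum_Iic m, sortDesc_eq_comp]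
    exact (Equiv.sum_comp _ fun j => max (hY.eigenvalues j - t) 0).symm
  calc ∑ i ∈ I, (sortDesc (hX.add hY).eigenvalues i - sortDesc hX.eigenvalues i)
      ≤ ∑ i ∈ I, ((sortDesc (hX.add hP).eigenvalues i - sortDesc hX.eigenvalues i) + t) :=
        sum_le_sum fun i _ => by linarith [hYP i]
    _ ≤ ∑ i, (sortDesc (hX.add hP).eigenvalues i - sortDesc hX.eigenvalues i) + (m + 1) * t := by
        rw [sum_add_distrib, sum_const, hI, nsmul_eq_mul]
        push_cast
        gcongr
        · exact fun i _ _ => sub_nonneg.mpr (hXP i)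
        · exact subset_univ I
    _ = ∑ j ∈ Iic m, sortDesc hY.eigenvalues j := by rw [htrace, hd]; ring

end Lidskii

/-- **Lidskii's theorem.** For Hermitian matrices `X, Y`, with `λ(A)` the decreasingly
ordered vector of eigenvalues of `A`, one has `λ(X+Y) ∈ λ(X) + Z`, where `Z` is the convex
hull of the set of all vectors obtained from `λ(Y)` by permuting its coordinates. -/
theorem lidskii (n : ℕ) (X Y : Matrix (Fin n) (Fin n) ℂ)
    (hX : X.IsHermitian) (hY : Y.IsHermitian) :
    ∃ z ∈ convexHull ℝ {w : Fin n → ℝ |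
        ∃ σ : Equiv.Perm (Fin n), w = sortDesc hY.eigenvalues ∘ σ},
      sortDesc (hX.add hY).eigenvalues = sortDesc hX.eigenvalues + z := by
  set z := sortDesc (hX.add hY).eigenvalues - sortDesc hX.eigenvalues
  refine ⟨z, mem_convexHull_perm_of_sum_Iic_le (fun m => ?_) ?_, (add_sub_cancel _ _).symm⟩
  · obtain ⟨I, hI, hsum⟩ := exists_card_eq_sum_Iic_sortDesc z m
    rw [hsum]
    exact sum_sortDesc_eigenvalues_add_sub_le hX hY hI
  · simp only [z, Pi.sub_apply, sum_sub_distrib, IsHermitian.sum_sortDesc_eigenvalues,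
      trace_add, map_add, add_sub_cancel_left]
end
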